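/- arXiv:2407.03712 — 7 statements merged into one kernel-verified Lean document; each statement's English description precedes it below -/
import Mathlib

section
/- The shock branch function f_R(p₁₁) = (p₁₁ − p₁₁,R)·(ρ_R(2p₁₁ + p₁₁,R))^{−1/2} defined for p₁₁ ≥ p₁₁,R (with ρ_R>0, p₁₁,R>0) is strictly increasing, and its derivative at p₁₁ is Φ₁ = ((p₁₁ + 2p₁₁,R)/(2p₁₁ + p₁₁,R))·(ρ_R(2p₁₁ + p₁₁,R))^{−1/2}. -/
open Set

lemma shock_deriv (ρR p₁₁R : ℝ) (hρ : 0 < ρR) (hp : 0 < p₁₁R)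
    (p₁₁ : ℝ) (hle : p₁₁R ≤ p₁₁) :
    HasDerivAt (fun p => (p - p₁₁R) / Real.sqrt (ρR * (2 * p + p₁₁R)))
      ((p₁₁ + 2 * p₁₁R) / (2 * p₁₁ + p₁₁R) / Real.sqrt (ρR * (2 * p₁₁ + p₁₁R)))
      p₁₁ := by
  have hu : 0 < ρR * (2 * p₁₁ + p₁₁R) := by nlinarith
  have hs : 0 < Real.sqrt (ρR * (2 * p₁₁ + p₁₁R)) := Real.sqrt_pos.mpr hu
  have hinner : HasDerivAt (fun p : ℝ => ρR * (2 * p + p₁₁R)) (ρR * 2) p₁₁ := by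
    have : HasDerivAt (fun p : ℝ => 2 * p + p₁₁R) 2 p₁₁ :=
      by simpa using ((hasDerivAt_id p₁₁).const_mul 2).add_const p₁₁R
    simpa using this.const_mul ρR
  have hg : HasDerivAt (fun p => Real.sqrt (ρR * (2 * p + p₁₁R)))
      (ρR * 2 / (2 * Real.sqrt (ρR * (2 * p₁₁ + p₁₁R)))) p₁₁ := by
    have := (Real.hasDerivAt_sqrt (ne_of_gt hu)).comp p₁₁ hinner
    simpa [Function.comp_def, div_eq_inv_mul, mul_comm, mul_assoc, mul_left_comm] using this
  have hnum : HasDerivAt (fun p : ℝ => p - p₁₁R) 1 p₁₁ :=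
    (hasDerivAt_id p₁₁).sub_const p₁₁R
  have h : HasDerivAt (fun p => (p - p₁₁R) / Real.sqrt (ρR * (2 * p + p₁₁R))) _ p₁₁ :=
    hnum.div hg (ne_of_gt hs)
  convert h using 1
  have hsq : Real.sqrt (ρR * (2 * p₁₁ + p₁₁R)) ^ 2 = ρR * (2 * p₁₁ + p₁₁R) :=
    Real.sq_sqrt (le_of_lt hu)
  have h2 : (2 : ℝ) * p₁₁ + p₁₁R ≠ 0 := by nlinarith
  set s := Real.sqrt (ρR * (2 * p₁₁ + p₁₁R)) with hsdef
  field_simp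
  rw [hsq, div_eq_iff (by intro h; linarith)]
  ring

/-- The shock branch f_R is strictly increasing on [p₁₁,R, ∞) with derivative Φ₁. -/
theorem shock_branch_strictMono_deriv (ρR p₁₁R : ℝ) (hρ : 0 < ρR) (hp : 0 < p₁₁R) :
    StrictMonoOn (fun p₁₁ => (p₁₁ - p₁₁R) / Real.sqrt (ρR * (2 * p₁₁ + p₁₁R)))
      (Ici p₁₁R) ∧
    ∀ p₁₁ : ℝ, p₁₁R ≤ p₁₁ →
      HasDerivAt (fun p => (p - p₁₁R) / Real.sqrt (ρR * (2 * p + p₁₁R)))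
        ((p₁₁ + 2 * p₁₁R) / (2 * p₁₁ + p₁₁R) / Real.sqrt (ρR * (2 * p₁₁ + p₁₁R)))
        p₁₁ := by
  refine ⟨?_, fun p₁₁ hle => shock_deriv ρR p₁₁R hρ hp p₁₁ hle⟩
  have hcont : ContinuousOn
      (fun p₁₁ => (p₁₁ - p₁₁R) / Real.sqrt (ρR * (2 * p₁₁ + p₁₁R))) (Ici p₁₁R) :=
    fun x hx => ((shock_deriv ρR p₁₁R hρ hp x hx).continuousAt).continuousWithinAt
  refine StrictMonoOn.mono (strictMonoOn_of_deriv_pos (convex_Ici p₁₁R) hcont ?_) le_rfl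
  intro x hx
  rw [interior_Ici] at hx
  have hle : p₁₁R ≤ x := le_of_lt hx
  rw [(shock_deriv ρR p₁₁R hρ hp x hle).deriv]
  have hu : 0 < ρR * (2 * x + p₁₁R) := by nlinarith
  have hs : 0 < Real.sqrt (ρR * (2 * x + p₁₁R)) := Real.sqrt_pos.mpr hu
  have h1 : 0 < x + 2 * p₁₁R := by nlinarith
  have h2 : 0 < 2 * x + p₁₁R := by nlinarith
  positivity
end

section
/- The rarefaction branch function f_R(p₁₁) = c_R((p₁₁/p₁₁,R)^{1/3} − 1) for 0 < p₁₁ ≤ p₁₁,R, with c_R=√(3p₁₁,R/ρ_R), is strictly increasing and negative for p₁₁ < p₁₁,R, and the full function f(p₁₁) = f_L(p₁₁) + f_R(p₁₁) + u₁,R − u₁,L (with f_L, f_R each being the shock branch above their respective reference pressure and the rarefaction branch below) is continuous and strictly increasing on (0,∞). -/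
/-!
Each of `f_L`, `f_R` is a wave curve: a rarefaction branch `c ((p/p₀)^{1/3} - 1)` for `p ≤ p₀`,
which is increasing and `≤ 0`, glued at `p₀` (where both branches vanish) to a shock branch
`(p - p₀)/√(ρ(2p + p₀))`, which is increasing and `≥ 0`. Each wave curve is therefore continuous,
and strictly increasing on `[0, ∞)`, and so is their sum shifted by the constant `u_R - u_L`.
-/

open Set Real

noncomputable section

namespace RiemannProblem

variable {ρ p₀ : ℝ}

def rarefactionBranch (ρ p₀ p : ℝ) : ℝ := √(3 * p₀ / ρ) * ((p / p₀) ^ ((1 : ℝ) / 3) - 1)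

def shockBranch (ρ p₀ p : ℝ) : ℝ := (p - p₀) / √(ρ * (2 * p + p₀))

def waveCurve (ρ p₀ p : ℝ) : ℝ :=
  if p ≤ p₀ then rarefactionBranch ρ p₀ p else shockBranch ρ p₀ p

theorem rarefactionBranch_self (hp₀ : p₀ ≠ 0) : rarefactionBranch ρ p₀ p₀ = 0 := by
  simp [rarefactionBranch, div_self hp₀]

theorem shockBranch_self : shockBranch ρ p₀ p₀ = 0 := by
  simp [shockBranch]

theorem continuous_rarefactionBranch : Continuous (rarefactionBranch ρ p₀) :=
  continuous_const.mul <|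
    ((continuous_id.div_const p₀).rpow_const fun _ => Or.inr (by norm_num)).sub continuous_const

theorem continuousOn_shockBranch (hρ : 0 < ρ) (hp₀ : 0 < p₀) :
    ContinuousOn (shockBranch ρ p₀) (Ici p₀) := by
  intro p (hp : p₀ ≤ p)
  have hpos : 0 < √(ρ * (2 * p + p₀)) := sqrt_pos.2 (by nlinarith)
  refine ContinuousAt.continuousWithinAt ?_
  exact ContinuousAt.div (by fun_prop) (by fun_prop) hpos.ne'

theorem rarefactionBranch_strictMonoOn (hρ : 0 < ρ) (hp₀ : 0 < p₀) :
    StrictMonoOn (rarefactionBranch ρ p₀) (Ici 0) := by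
  intro a (ha : 0 ≤ a) b _ hab
  have hc : 0 < √(3 * p₀ / ρ) := sqrt_pos.2 (by positivity)
  have hroot : (a / p₀) ^ ((1 : ℝ) / 3) < (b / p₀) ^ ((1 : ℝ) / 3) :=
    rpow_lt_rpow (by positivity) (by gcongr) (by norm_num)
  unfold rarefactionBranch
  gcongr

theorem shockBranch_strictMonoOn (hρ : 0 < ρ) (hp₀ : 0 < p₀) :
    StrictMonoOn (shockBranch ρ p₀) (Ici p₀) := by
  intro a (ha : p₀ ≤ a) b (hb : p₀ ≤ b) hab
  have hda : 0 < ρ * (2 * a + p₀) := by nlinarith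
  have hdb : 0 < ρ * (2 * b + p₀) := by nlinarith
  rw [shockBranch, shockBranch, div_lt_div_iff₀ (sqrt_pos.2 hda) (sqrt_pos.2 hdb)]
  refine lt_of_pow_lt_pow_left₀ 2 (by positivity) ?_
  rw [mul_pow, mul_pow, sq_sqrt hda.le, sq_sqrt hdb.le]
  have key : (b - p₀) ^ 2 * (ρ * (2 * a + p₀)) - (a - p₀) ^ 2 * (ρ * (2 * b + p₀))
      = ρ * (b - a) * (2 * (a - p₀) * (b - p₀) + 3 * p₀ * ((a - p₀) + (b - p₀))) := by
    ring
  have hsum : 0 < 3 * p₀ * ((a - p₀) + (b - p₀)) := by nlinarith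
  have hprod : 0 ≤ 2 * (a - p₀) * (b - p₀) := by nlinarith
  have hba : 0 < b - a := by linarith
  have hpos : 0 < ρ * (b - a) * (2 * (a - p₀) * (b - p₀) + 3 * p₀ * ((a - p₀) + (b - p₀))) := by
    positivity
  linarith

theorem waveCurve_self (hp₀ : p₀ ≠ 0) : waveCurve ρ p₀ p₀ = 0 := by
  simp [waveCurve, rarefactionBranch_self hp₀]

theorem continuous_waveCurve (hρ : 0 < ρ) (hp₀ : 0 < p₀) : Continuous (waveCurve ρ p₀) :=
  continuous_if_le continuous_id continuous_const continuous_rarefactionBranch.continuousOn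
    (continuousOn_shockBranch hρ hp₀) fun p (hp : p = p₀) => by
      rw [hp, rarefactionBranch_self hp₀.ne', shockBranch_self]

theorem waveCurve_strictMonoOn (hρ : 0 < ρ) (hp₀ : 0 < p₀) :
    StrictMonoOn (waveCurve ρ p₀) (Ici 0) := by
  have hrare : StrictMonoOn (waveCurve ρ p₀) (Icc 0 p₀) :=
    ((rarefactionBranch_strictMonoOn hρ hp₀).mono Icc_subset_Ici_self).congr
      fun p hp => (if_pos hp.2).symm
  have hshock : StrictMonoOn (waveCurve ρ p₀) (Ici p₀) :=
    (shockBranch_strictMonoOn hρ hp₀).congr fun p (hp : p₀ ≤ p) => by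
      rcases hp.eq_or_lt with rfl | hlt
      · rw [waveCurve_self hp₀.ne', shockBranch_self]
      · exact (if_neg hlt.not_ge).symm
  rw [← Icc_union_Ici_eq_Ici hp₀.le]
  exact hrare.union hshock (isGreatest_Icc hp₀.le) isLeast_Ici

theorem waveCurve_neg (hρ : 0 < ρ) (hp₀ : 0 < p₀) {p : ℝ} (hp : 0 ≤ p) (hlt : p < p₀) :
    waveCurve ρ p₀ p < 0 :=
  waveCurve_self (ρ := ρ) hp₀.ne' ▸ waveCurve_strictMonoOn hρ hp₀ hp hp₀.le hlt

end RiemannProblem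

end

open RiemannProblem in
/-- The rarefaction branch of f_R is strictly increasing and negative below
p₁₁,R, and the full Riemann function f is continuous and strictly increasing
on (0,∞). -/
theorem riemann_function_strictMono (ρL p₁₁L ρR p₁₁R u₁L u₁R : ℝ)
    (hρL : 0 < ρL) (hpL : 0 < p₁₁L) (hρR : 0 < ρR) (hpR : 0 < p₁₁R) :
    let cL := Real.sqrt (3 * p₁₁L / ρL)
    let cR := Real.sqrt (3 * p₁₁R / ρR)
    let fL : ℝ → ℝ := fun p =>
      if p ≤ p₁₁L then cL * ((p / p₁₁L) ^ ((1:ℝ)/3) - 1)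
      else (p - p₁₁L) / Real.sqrt (ρL * (2 * p + p₁₁L))
    let fR : ℝ → ℝ := fun p =>
      if p ≤ p₁₁R then cR * ((p / p₁₁R) ^ ((1:ℝ)/3) - 1)
      else (p - p₁₁R) / Real.sqrt (ρR * (2 * p + p₁₁R))
    let f : ℝ → ℝ := fun p => fL p + fR p + u₁R - u₁L
    StrictMonoOn fR (Ioc 0 p₁₁R) ∧
    (∀ p : ℝ, 0 < p → p < p₁₁R → fR p < 0) ∧
    ContinuousOn f (Ioi 0) ∧
    StrictMonoOn f (Ioi 0) := by
  intro cL cR fL fR f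
  have hL : StrictMonoOn fL (Ici 0) := waveCurve_strictMonoOn hρL hpL
  have hR : StrictMonoOn fR (Ici 0) := waveCurve_strictMonoOn hρR hpR
  refine ⟨hR.mono fun p hp => le_of_lt hp.1, fun p hp hlt => waveCurve_neg hρR hpR hp.le hlt,
    ?_, ?_⟩
  · exact (((continuous_waveCurve hρL hpL).add (continuous_waveCurve hρR hpR)).add
      continuous_const |>.sub continuous_const).continuousOn
  · exact ((hL.add hR).add_const (u₁R - u₁L)).mono Ioi_subset_Ici_self |>.congr
      fun p _ => (add_sub_assoc _ _ _).symm
end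

section
/- The function p₁₁ ↦ f_K(p₁₁) defined piecewise by the shock branch for p₁₁ > p₁₁,K and the rarefaction branch for p₁₁ ≤ p₁₁,K is continuously differentiable at p₁₁ = p₁₁,K, with common derivative value 1/(ρ_K c_K) where c_K = √(3p₁₁,K/ρ_K). -/
open Real Set Filter Topology

namespace RiemannC1Aux

lemma rare_hasDerivAt {x : ℝ} (hx : 0 < x) (c : ℝ) {p : ℝ} (hp : 0 < p) :
    HasDerivAt (fun q => c * ((q / x) ^ ((1:ℝ)/3) - 1))
      (c * ((1:ℝ)/3 * (p / x) ^ ((1:ℝ)/3 - 1) * (1 / x))) p := by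
  have h1 : HasDerivAt (fun q : ℝ => q / x) (1 / x) p := by
    simpa using (hasDerivAt_id p).div_const x
  have h2 := (h1.rpow_const (p := (1:ℝ)/3) (Or.inl (by positivity))).sub_const 1
  have h3 := h2.const_mul c
  refine h3.congr_deriv ?_
  ring

lemma shock_hasDerivAt {ρK x : ℝ} (hρ : 0 < ρK) (hx : 0 < x) {p : ℝ} (hp : 0 < p) :
    HasDerivAt (fun q => (q - x) / Real.sqrt (ρK * (2 * q + x)))
      ((1 * Real.sqrt (ρK * (2 * p + x)) -
        (p - x) * (ρK * 2 / (2 * Real.sqrt (ρK * (2 * p + x))))) /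
        Real.sqrt (ρK * (2 * p + x)) ^ 2) p := by
  have hpos : 0 < ρK * (2 * p + x) := by positivity
  have h1 : HasDerivAt (fun q : ℝ => ρK * (2 * q + x)) (ρK * 2) p := by
    have := (((hasDerivAt_id p).const_mul 2).add_const x).const_mul ρK
    simpa using this
  have h2 : HasDerivAt (fun q => Real.sqrt (ρK * (2 * q + x)))
      (ρK * 2 / (2 * Real.sqrt (ρK * (2 * p + x)))) p := h1.sqrt hpos.ne'
  exact ((hasDerivAt_id p).sub_const x).div h2 (Real.sqrt_ne_zero'.mpr hpos)

end RiemannC1Aux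

/-- The piecewise function f_K is continuously differentiable at p₁₁,K with
derivative 1/(ρ_K c_K) there. -/
theorem riemann_branch_C1_at_junction (ρK p₁₁K : ℝ) (hρ : 0 < ρK) (hp : 0 < p₁₁K) :
    let cK := Real.sqrt (3 * p₁₁K / ρK)
    let fK : ℝ → ℝ := fun p =>
      if p ≤ p₁₁K then cK * ((p / p₁₁K) ^ ((1:ℝ)/3) - 1)
      else (p - p₁₁K) / Real.sqrt (ρK * (2 * p + p₁₁K))
    HasDerivAt fK (1 / (ρK * cK)) p₁₁K ∧
    ContinuousAt (deriv fK) p₁₁K := by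
  intro cK fK
  have hc : 0 < cK := Real.sqrt_pos.mpr (by positivity)
  have hcc' : ρK * (cK * cK) = 3 * p₁₁K := by
    show ρK * (Real.sqrt _ * Real.sqrt _) = _
    rw [Real.mul_self_sqrt (by positivity)]
    field_simp
  -- value identities
  have hval : cK * ((1:ℝ)/3 * (p₁₁K / p₁₁K) ^ ((1:ℝ)/3 - 1) * (1 / p₁₁K))
      = 1 / (ρK * cK) := by
    rw [div_self hp.ne', Real.one_rpow]
    field_simp
    nlinarith [hcc']
  have hs : Real.sqrt (ρK * (2 * p₁₁K + p₁₁K)) = ρK * cK := by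
    rw [show ρK * (2 * p₁₁K + p₁₁K) = (ρK * cK) ^ 2 by nlinarith [hcc']]
    exact Real.sqrt_sq (by positivity)
  have hsval : (1 * Real.sqrt (ρK * (2 * p₁₁K + p₁₁K)) -
      (p₁₁K - p₁₁K) * (ρK * 2 / (2 * Real.sqrt (ρK * (2 * p₁₁K + p₁₁K))))) /
      Real.sqrt (ρK * (2 * p₁₁K + p₁₁K)) ^ 2 = 1 / (ρK * cK) := by
    rw [hs, sub_self, zero_mul, sub_zero, one_mul, sq]
    rw [div_mul_eq_div_div_swap, div_self (by positivity)]
  -- fK agrees with each branch appropriately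
  have hfx : fK p₁₁K = 0 := by
    simp only [fK, if_pos le_rfl, div_self hp.ne', Real.one_rpow, sub_self, mul_zero]
  -- Part 1
  have hL0 := RiemannC1Aux.rare_hasDerivAt hp cK hp
  rw [hval] at hL0
  have hR0 := RiemannC1Aux.shock_hasDerivAt hρ hp hp
  rw [hsval] at hR0
  have hL : HasDerivWithinAt fK (1 / (ρK * cK)) (Iic p₁₁K) p₁₁K :=
    hL0.hasDerivWithinAt.congr (fun y hy => if_pos hy) (if_pos le_rfl)
  have hR : HasDerivWithinAt fK (1 / (ρK * cK)) (Ici p₁₁K) p₁₁K := by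
    refine hR0.hasDerivWithinAt.congr (fun y hy => ?_) ?_
    · rcases eq_or_lt_of_le (Set.mem_Ici.mp hy) with h | h
      · rw [← h, hfx, sub_self, zero_div]
      · exact if_neg (not_le.mpr h)
    · rw [hfx, sub_self, zero_div]
  have h1 : HasDerivAt fK (1 / (ρK * cK)) p₁₁K := by
    have := hL.union hR
    rw [Iic_union_Ici] at this
    exact hasDerivWithinAt_univ.mp this
  refine ⟨h1, ?_⟩
  -- Part 2: continuity of the derivative
  set r' : ℝ → ℝ := fun p => cK * ((1:ℝ)/3 * (p / p₁₁K) ^ ((1:ℝ)/3 - 1) * (1 / p₁₁K))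
    with hr'def
  set s' : ℝ → ℝ := fun p =>
    (1 * Real.sqrt (ρK * (2 * p + p₁₁K)) -
      (p - p₁₁K) * (ρK * 2 / (2 * Real.sqrt (ρK * (2 * p + p₁₁K))))) /
      Real.sqrt (ρK * (2 * p + p₁₁K)) ^ 2 with hs'def
  set D : ℝ → ℝ := fun p => if p ≤ p₁₁K then r' p else s' p with hDdef
  have hev : ∀ p ∈ Ioi (0:ℝ), deriv fK p = D p := by
    intro p hp0
    rcases lt_trichotomy p p₁₁K with h | h | h
    · have heq : fK =ᶠ[𝓝 p] (fun q => cK * ((q / p₁₁K) ^ ((1:ℝ)/3) - 1)) := by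
        filter_upwards [Iio_mem_nhds h] with q hq
        exact if_pos hq.le
      rw [heq.deriv_eq, (RiemannC1Aux.rare_hasDerivAt hp cK hp0).deriv]
      simp only [D, if_pos h.le, r']
    · subst h
      rw [h1.deriv]
      simp only [D, if_pos le_rfl, r']
      exact hval.symm
    · have heq : fK =ᶠ[𝓝 p] (fun q => (q - p₁₁K) / Real.sqrt (ρK * (2 * q + p₁₁K))) := by
        filter_upwards [Ioi_mem_nhds h] with q hq
        exact if_neg (not_le.mpr hq)
      rw [heq.deriv_eq, (RiemannC1Aux.shock_hasDerivAt hρ hp hp0).deriv]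
      simp only [D, if_neg (not_le.mpr h), s']
  have hevq : deriv fK =ᶠ[𝓝 p₁₁K] D := by
    filter_upwards [Ioi_mem_nhds hp] with q hq using hev q hq
  -- continuity of r' and s' at p₁₁K
  have hr'c : ContinuousAt r' p₁₁K := by
    have hg : ContinuousAt (fun p : ℝ => (p / p₁₁K) ^ ((1:ℝ)/3 - 1)) p₁₁K := by
      refine ContinuousAt.rpow_const ?_ (Or.inl ?_)
      · exact continuousAt_id.div_const p₁₁K
      · simp [div_self hp.ne']
    exact (((hg.const_mul ((1:ℝ)/3)).mul_const (1 / p₁₁K)).const_mul cK)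
  have hsq : ContinuousAt (fun p : ℝ => Real.sqrt (ρK * (2 * p + p₁₁K))) p₁₁K := by
    fun_prop
  have hsq0 : Real.sqrt (ρK * (2 * p₁₁K + p₁₁K)) ≠ 0 :=
    Real.sqrt_ne_zero'.mpr (by positivity)
  have hs'c : ContinuousAt s' p₁₁K := by
    refine ContinuousAt.div ?_ (hsq.pow 2) (pow_ne_zero 2 hsq0)
    refine (continuousAt_const.mul hsq).sub ?_
    refine (continuousAt_id.sub continuousAt_const).mul ?_
    exact continuousAt_const.div (continuousAt_const.mul hsq)
      (by simpa using mul_ne_zero two_ne_zero hsq0)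
  have hrs : r' p₁₁K = s' p₁₁K := by
    rw [hr'def, hs'def]
    simp only []
    rw [hval, hsval]
  have hDL : ContinuousWithinAt D (Iic p₁₁K) p₁₁K :=
    hr'c.continuousWithinAt.congr (fun y hy => if_pos hy) (if_pos le_rfl)
  have hDR : ContinuousWithinAt D (Ici p₁₁K) p₁₁K := by
    refine hs'c.continuousWithinAt.congr (fun y hy => ?_) ?_
    · rcases eq_or_lt_of_le (Set.mem_Ici.mp hy) with h | h
      · rw [← h]
        show D p₁₁K = s' p₁₁K
        rw [hDdef]; simp only [if_pos le_rfl]; exact hrs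
      · exact if_neg (not_le.mpr h)
    · show D p₁₁K = s' p₁₁K
      rw [hDdef]; simp only [if_pos le_rfl]; exact hrs
  have hDc : ContinuousAt D p₁₁K := by
    have := hDL.union hDR
    rw [Iic_union_Ici] at this
    exact (continuousWithinAt_univ D p₁₁K).mp this
  exact hDc.congr hevq.symm
end

section
/- The determinant of the 2×2 matrix A^R with entries A₁₁ = ρ_{*R}(u₁,* − σ_R), A₁₂ = 1, A₂₁ = E₁₁,*R − ½ρ_{*R}u₁,*σ_R, A₂₂ = u₁,* − ½σ_R, equals (p₁₁,*(2ρ_R − ρ_{*R}) + p₁₁,R ρ_R)/(2ρ_{*R}), which is positive when p₁₁,* > p₁₁,R > 0, ρ_R > 0. -/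
/-- The determinant of A^R equals (p₁₁,*(2ρ_R − ρ_{*R}) + p₁₁,R ρ_R)/(2ρ_{*R}),
which is positive. -/
theorem det_AR_positive (ρR p₁₁R p₁₁s u₁s : ℝ)
    (hρ : 0 < ρR) (hp : 0 < p₁₁R) (hs : p₁₁R < p₁₁s) :
    let ρsR := ρR * (2 * p₁₁s + p₁₁R) / (p₁₁s + 2 * p₁₁R)
    let σR := u₁s + (1 / ρsR) * Real.sqrt ((2 * p₁₁s + p₁₁R) * ρR)
    let E₁₁sR := (p₁₁s + ρsR * u₁s ^ 2) / 2
    let detA := ρsR * (u₁s - σR) * (u₁s - σR / 2)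
      - (E₁₁sR - ρsR * u₁s * σR / 2)
    detA = (p₁₁s * (2 * ρR - ρsR) + p₁₁R * ρR) / (2 * ρsR) ∧ 0 < detA := by
  intro ρsR σR E₁₁sR detA
  have hps : 0 < p₁₁s := hp.trans hs
  have hA : 0 < 2 * p₁₁s + p₁₁R := by linarith
  have hB : 0 < p₁₁s + 2 * p₁₁R := by linarith
  have hρsR : 0 < ρsR := by
    have := mul_pos hρ hA
    exact div_pos this hB
  set s := Real.sqrt ((2 * p₁₁s + p₁₁R) * ρR) with hsdef
  have hs2 : s * s = (2 * p₁₁s + p₁₁R) * ρR :=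
    Real.mul_self_sqrt (le_of_lt (mul_pos hA hρ))
  have expand : detA = ρsR * ((1 / ρsR) * s) ^ 2 / 2 - p₁₁s / 2 := by
    show ρsR * (u₁s - (u₁s + 1 / ρsR * s)) * (u₁s - (u₁s + 1 / ρsR * s) / 2)
      - ((p₁₁s + ρsR * u₁s ^ 2) / 2 - ρsR * u₁s * (u₁s + 1 / ρsR * s) / 2)
      = ρsR * ((1 / ρsR) * s) ^ 2 / 2 - p₁₁s / 2
    ring
  have step : ρsR * ((1 / ρsR) * s) ^ 2 / 2 = (s * s) / (2 * ρsR) := by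
    field_simp
  have key : detA = ((2 * p₁₁s + p₁₁R) * ρR) / (2 * ρsR) - p₁₁s / 2 := by
    rw [expand, step, hs2]
  have hrhs : (p₁₁s * (2 * ρR - ρsR) + p₁₁R * ρR) / (2 * ρsR)
      = ((2 * p₁₁s + p₁₁R) * ρR) / (2 * ρsR) - p₁₁s / 2 := by
    field_simp
    ring
  refine ⟨key.trans hrhs.symm, ?_⟩
  rw [key]
  have hnum : ρsR * p₁₁s < (2 * p₁₁s + p₁₁R) * ρR := by
    show ρR * (2 * p₁₁s + p₁₁R) / (p₁₁s + 2 * p₁₁R) * p₁₁s < (2 * p₁₁s + p₁₁R) * ρR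
    rw [div_mul_eq_mul_div, div_lt_iff₀ hB]
    nlinarith [mul_pos (mul_pos hA hρ) hp]
  rw [sub_pos, div_lt_div_iff₀ two_pos (by positivity)]
  linarith [hnum]
end

section
/- For the self-similar solution inside the 1-rarefaction fan of the ten-moment equations, given left state (ρ_L,u₁,L,p₁₁,L) with c_L=√(3p₁₁,L/ρ_L), the functions ρ(ξ) = (ρ_L/2)(1 + (u₁,L − ξ)/c_L), u₁(ξ) = (c_L + u₁,L + ξ)/2, p₁₁(ξ) = (p₁₁,L/8)(1 + (u₁,L−ξ)/c_L)³ satisfy: (i) u₁(ξ) − c(ξ) = ξ where c(ξ)=√(3p₁₁(ξ)/ρ(ξ)), and (ii) p₁₁(ξ)/ρ(ξ)³ = p₁₁,L/ρ_L³, for all ξ in (u₁,L − c_L, u₁,* − c_{*L}) where ρ(ξ)>0. -/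
/-!
Inside the fan the state is the left state rescaled by `s = (1 + (u₁,L − ξ)/c_L)/2`:
`ρ = ρ_L s` and `p₁₁ = p₁₁,L s³`. Under `(ρ, p) ↦ (ρ s, p s³)` the sound speed scales by `s`
and `p/ρ³` is unchanged, so `c(ξ) = c_L s` and (i) reduces to a linear identity in `ξ`.
-/

namespace TenMoment

noncomputable def soundSpeed (ρ p : ℝ) : ℝ := √(3 * p / ρ)

noncomputable def entropy (ρ p : ℝ) : ℝ := p / ρ ^ 3

theorem soundSpeed_mul_mul_pow_three (ρ p : ℝ) {s : ℝ} (hs : 0 ≤ s) :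
    soundSpeed (ρ * s) (p * s ^ 3) = soundSpeed ρ p * s := by
  have hsq : 3 * (p * s ^ 3) / (ρ * s) = 3 * p / ρ * s ^ 2 := by
    rcases hs.eq_or_lt with rfl | hs
    · simp
    · field_simp
  rw [soundSpeed, soundSpeed, hsq, Real.sqrt_mul' _ (sq_nonneg s), Real.sqrt_sq hs]

theorem entropy_mul_mul_pow_three (ρ p : ℝ) {s : ℝ} (hs : s ≠ 0) :
    entropy (ρ * s) (p * s ^ 3) = entropy ρ p := by
  rw [entropy, entropy, mul_pow, mul_div_mul_right _ _ (pow_ne_zero 3 hs)]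

end TenMoment

/-- Inside the 1-rarefaction fan: the fan is traced by the λ₁ = u₁ − c
characteristic through the origin, and S₁ = p₁₁/ρ³ is invariant. -/
theorem rarefaction_fan_selfsimilar (ρL u₁L p₁₁L u₁s csL : ℝ)
    (hρ : 0 < ρL) (hp : 0 < p₁₁L) :
    let cL := Real.sqrt (3 * p₁₁L / ρL)
    let ρf : ℝ → ℝ := fun ξ => ρL / 2 * (1 + (u₁L - ξ) / cL)
    let u₁f : ℝ → ℝ := fun ξ => (cL + u₁L + ξ) / 2
    let p₁₁f : ℝ → ℝ := fun ξ => p₁₁L / 8 * (1 + (u₁L - ξ) / cL) ^ 3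
    ∀ ξ : ℝ, ξ ∈ Set.Ioo (u₁L - cL) (u₁s - csL) → 0 < ρf ξ →
      (u₁f ξ - Real.sqrt (3 * p₁₁f ξ / ρf ξ) = ξ ∧
       p₁₁f ξ / (ρf ξ) ^ 3 = p₁₁L / ρL ^ 3) := by
  intro cL ρf u₁f p₁₁f ξ _ hρf
  have hcL : cL ≠ 0 := (Real.sqrt_pos.mpr (by positivity)).ne'
  set s := (1 + (u₁L - ξ) / cL) / 2
  have hρs : ρf ξ = ρL * s := by simp only [ρf, s]; ring
  have hps : p₁₁f ξ = p₁₁L * s ^ 3 := by simp only [p₁₁f, s]; ring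
  have hs : 0 < s := pos_of_mul_pos_right (hρs ▸ hρf) hρ.le
  refine ⟨?_, ?_⟩
  · have hc : √(3 * p₁₁f ξ / ρf ξ) = cL * s := by
      rw [hρs, hps]; exact TenMoment.soundSpeed_mul_mul_pow_three ρL p₁₁L hs.le
    rw [hc]
    simp only [u₁f, s]
    field_simp
    ring
  · rw [hρs, hps]
    exact TenMoment.entropy_mul_mul_pow_three ρL p₁₁L hs.ne'
end

section
/- For the quasi-linear form of the 1D ten-moment equations, the gradient with respect to V of the eigenvalue λ₆ = u₁ + c (c=√(3p₁₁/ρ)) dotted with the eigenvector r̃₆ = (ρp₁₁, cp₁₁, cp₁₂, 3p₁₁², 3p₁₁p₁₂, p₁₁p₂₂+2p₁₂²)ᵀ is nonzero (the 6-field is genuinely nonlinear), whereas ∇_V λ₅ · r̃₅ = 0 for λ₅ = u₁ + c/√3 and r̃₅ = (0,0,c/√3,0,p₁₁,2p₁₂)ᵀ (the 5-field is linearly degenerate). -/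
/-- The 6-characteristic field is genuinely nonlinear and the 5-field is
linearly degenerate. -/
theorem genuinely_nonlinear_and_degenerate (ρ u₁ u₂ p₁₁ p₁₂ p₂₂ : ℝ)
    (hρ : 0 < ρ) (hp : 0 < p₁₁) :
    let c := Real.sqrt (3 * p₁₁ / ρ)
    let lam₆ : (Fin 6 → ℝ) → ℝ := fun V => V 1 + Real.sqrt (3 * V 3 / V 0)
    let lam₅ : (Fin 6 → ℝ) → ℝ :=
      fun V => V 1 + Real.sqrt (3 * V 3 / V 0) / Real.sqrt 3
    let V : Fin 6 → ℝ := ![ρ, u₁, u₂, p₁₁, p₁₂, p₂₂]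
    let r₆ : Fin 6 → ℝ :=
      ![ρ * p₁₁, c * p₁₁, c * p₁₂, 3 * p₁₁ ^ 2, 3 * p₁₁ * p₁₂,
        p₁₁ * p₂₂ + 2 * p₁₂ ^ 2]
    let r₅ : Fin 6 → ℝ := ![0, 0, c / Real.sqrt 3, 0, p₁₁, 2 * p₁₂]
    fderiv ℝ lam₆ V r₆ ≠ 0 ∧ fderiv ℝ lam₅ V r₅ = 0 := by
  intro c lam₆ lam₅ V r₆ r₅
  have hρ' : ρ ≠ 0 := hρ.ne'
  have hx : (0:ℝ) < 3 * p₁₁ / ρ := by positivity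
  have hc : 0 < c := Real.sqrt_pos.mpr hx
  have hcsq : c * c = 3 * p₁₁ / ρ := Real.mul_self_sqrt hx.le
  have hV0 : V 0 = ρ := rfl
  have hV3 : V 3 = p₁₁ := rfl
  set P0 : (Fin 6 → ℝ) →L[ℝ] ℝ := ContinuousLinearMap.proj 0 with hP0
  set P1 : (Fin 6 → ℝ) →L[ℝ] ℝ := ContinuousLinearMap.proj 1 with hP1
  set P3 : (Fin 6 → ℝ) →L[ℝ] ℝ := ContinuousLinearMap.proj 3 with hP3
  have h0 : HasFDerivAt (fun W : Fin 6 → ℝ => W 0) P0 V := P0.hasFDerivAt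
  have h3 : HasFDerivAt (fun W : Fin 6 → ℝ => W 3) P3 V := P3.hasFDerivAt
  have h1 : HasFDerivAt (fun W : Fin 6 → ℝ => W 1) P1 V := P1.hasFDerivAt
  have hnum : HasFDerivAt (fun W : Fin 6 → ℝ => 3 * W 3) ((3:ℝ) • P3) V :=
    h3.const_mul 3
  have hinv : HasFDerivAt (fun W : Fin 6 → ℝ => (W 0)⁻¹)
      (-((ρ ^ 2)⁻¹ • P0)) V := by
    have h := (hasDerivAt_inv hρ').comp_hasFDerivAt V h0
    simpa [Function.comp_def] using h
  have hg : HasFDerivAt (fun W : Fin 6 → ℝ => 3 * W 3 / W 0)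
      ((3 * p₁₁) • (-((ρ ^ 2)⁻¹ • P0)) + ρ⁻¹ • ((3:ℝ) • P3)) V := by
    have h := hnum.mul hinv
    simp only [div_eq_mul_inv]
    simpa [hV0, hV3, Pi.mul_def] using h
  set L : (Fin 6 → ℝ) →L[ℝ] ℝ :=
    (3 * p₁₁) • (-((ρ ^ 2)⁻¹ • P0)) + ρ⁻¹ • ((3:ℝ) • P3) with hL
  have hgV : (fun W : Fin 6 → ℝ => 3 * W 3 / W 0) V = 3 * p₁₁ / ρ := rfl
  have hsq : HasDerivAt Real.sqrt (1 / (2 * c))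
      ((fun W : Fin 6 → ℝ => 3 * W 3 / W 0) V) := by
    rw [hgV]; exact Real.hasDerivAt_sqrt hx.ne'
  have hsqg : HasFDerivAt (fun W : Fin 6 → ℝ => Real.sqrt (3 * W 3 / W 0))
      ((1 / (2 * c)) • L) V := hsq.comp_hasFDerivAt V hg
  have h6 : HasFDerivAt lam₆ (P1 + (1 / (2 * c)) • L) V := h1.add hsqg
  have h5' : HasFDerivAt
      (fun W : Fin 6 → ℝ => (Real.sqrt 3)⁻¹ * Real.sqrt (3 * W 3 / W 0))
      ((Real.sqrt 3)⁻¹ • ((1 / (2 * c)) • L)) V := hsqg.const_mul _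
  have hlam₅ : lam₅ = fun W : Fin 6 → ℝ =>
      W 1 + (Real.sqrt 3)⁻¹ * Real.sqrt (3 * W 3 / W 0) := by
    funext W
    show W 1 + Real.sqrt (3 * W 3 / W 0) / Real.sqrt 3 = _
    ring
  have h5 : HasFDerivAt lam₅
      (P1 + (Real.sqrt 3)⁻¹ • ((1 / (2 * c)) • L)) V := by
    rw [hlam₅]; exact h1.add h5'
  have e6 : fderiv ℝ lam₆ V = P1 + (1 / (2 * c)) • L := h6.fderiv
  have e5 : fderiv ℝ lam₅ V = P1 + (Real.sqrt 3)⁻¹ • ((1 / (2 * c)) • L) :=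
    h5.fderiv
  constructor
  · rw [e6]
    have hr0 : r₆ 0 = ρ * p₁₁ := rfl
    have hr1 : r₆ 1 = c * p₁₁ := rfl
    have hr3 : r₆ 3 = 3 * p₁₁ ^ 2 := rfl
    simp only [ContinuousLinearMap.add_apply, ContinuousLinearMap.smul_apply,
      ContinuousLinearMap.neg_apply, hL, hP0, hP1, hP3,
      ContinuousLinearMap.proj_apply, hr0, hr1, hr3, smul_eq_mul]
    have hcc : c * c * ρ = 3 * p₁₁ := by
      rw [eq_div_iff hρ'] at hcsq; exact hcsq
    have hval : c * p₁₁ + 1 / (2 * c) *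
        (3 * p₁₁ * -((ρ ^ 2)⁻¹ * (ρ * p₁₁)) + ρ⁻¹ * (3 * (3 * p₁₁ ^ 2)))
        = 2 * c * p₁₁ := by
      field_simp
      linear_combination (-2) * hcc
    rw [hval]
    positivity
  · rw [e5]
    have hr0 : r₅ 0 = 0 := rfl
    have hr1 : r₅ 1 = 0 := rfl
    have hr3 : r₅ 3 = 0 := rfl
    simp only [ContinuousLinearMap.add_apply, ContinuousLinearMap.smul_apply,
      ContinuousLinearMap.neg_apply, hL, hP0, hP1, hP3,
      ContinuousLinearMap.proj_apply, hr0, hr1, hr3, smul_eq_mul]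
    ring
end

section
/- The directional derivative ∇_V λ₁ · r̃₁ for λ₁ = u₁ − c, c = √(3p₁₁/ρ), and r̃₁ = (ρp₁₁, −cp₁₁, −cp₁₂, 3p₁₁², 3p₁₁p₁₂, p₁₁p₂₂+2p₁₂²)ᵀ equals −2cp₁₁, which is nonzero for admissible states; hence the 1-field is genuinely nonlinear. -/
/-- ∇_V λ₁ · r̃₁ = −2cp₁₁ ≠ 0: the 1-field is genuinely nonlinear. -/
theorem field1_genuinely_nonlinear (ρ u₁ u₂ p₁₁ p₁₂ p₂₂ : ℝ)
    (hρ : 0 < ρ) (hp : 0 < p₁₁) :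
    let c := Real.sqrt (3 * p₁₁ / ρ)
    -- gradient of λ₁ = u₁ − c: (c/(2ρ), 1, 0, −3/(2ρc), 0, 0)
    let grad : Fin 6 → ℝ := ![c / (2 * ρ), 1, 0, -(3 / (2 * ρ * c)), 0, 0]
    let r₁ : Fin 6 → ℝ :=
      ![ρ * p₁₁, -(c * p₁₁), -(c * p₁₂), 3 * p₁₁ ^ 2, 3 * p₁₁ * p₁₂,
        p₁₁ * p₂₂ + 2 * p₁₂ ^ 2]
    (∑ i : Fin 6, grad i * r₁ i) = -(2 * c * p₁₁) ∧
    (∑ i : Fin 6, grad i * r₁ i) ≠ 0 := by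
  intro c grad r₁
  have hc : 0 < c := Real.sqrt_pos.mpr (by positivity)
  have hc2 : c ^ 2 = 3 * p₁₁ / ρ := by
    rw [sq]
    exact Real.mul_self_sqrt (by positivity)
  have hsum : (∑ i : Fin 6, grad i * r₁ i) = -(2 * c * p₁₁) := by
    have hexp : (∑ i : Fin 6, grad i * r₁ i) =
        c / (2 * ρ) * (ρ * p₁₁) + 1 * (-(c * p₁₁)) + 0 * (-(c * p₁₂)) +
        -(3 / (2 * ρ * c)) * (3 * p₁₁ ^ 2) + 0 * (3 * p₁₁ * p₁₂) +
        0 * (p₁₁ * p₂₂ + 2 * p₁₂ ^ 2) := by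
      rw [Fin.sum_univ_six]
      rfl
    rw [hexp]
    have h3 : 3 * p₁₁ = c ^ 2 * ρ := by
      field_simp at hc2
      linarith
    field_simp
    linear_combination (-3 * p₁₁) * h3
  refine ⟨hsum, ?_⟩
  rw [hsum]
  exact neg_ne_zero.mpr (by positivity)
end
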